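/- arXiv:2104.08003 — 8 statements merged into one kernel-verified Lean document; each statement's English description precedes it below -/
import Mathlib

section
/- Let E be the graph on vertex set {u, v, w, z, a, b, c, d, e, f} with edges uw, vw, wz, za, zb, ac, bc, ad, be, cf, df, ef. Then in every injective 3-edge-coloring of E, the edges uw, vw, and wz all receive the same color. -/
/-- `c` is an injective edge-coloring of `G`. -/
def IsInjColoring {V C : Type*} (G : SimpleGraph V) (c : Sym2 V → C) : Prop :=
  ∀ a b x y : V, G.Adj a b → G.Adj b x → G.Adj x y → a ≠ x → b ≠ y →
    c s(a, b) ≠ c s(x, y)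

/-- The edge gadget `E` on vertices `u=0, v=1, w=2, z=3, a=4, b=5, c=6, d=7, e=8, f=9`
with edges uw, vw, wz, za, zb, ac, bc, ad, be, cf, df, ef. -/
def gadgetE : SimpleGraph (Fin 10) :=
  SimpleGraph.fromEdgeSet
    {s(0, 2), s(1, 2), s(2, 3), s(3, 4), s(3, 5), s(4, 6), s(5, 6), s(4, 7),
     s(5, 8), s(6, 9), s(7, 9), s(8, 9)}

lemma gadgetE_adj_dec {a b : Fin 10}
    (h : s(a, b) ∈ ({s(0, 2), s(1, 2), s(2, 3), s(3, 4), s(3, 5), s(4, 6), s(5, 6), s(4, 7),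
     s(5, 8), s(6, 9), s(7, 9), s(8, 9)} : Finset (Sym2 (Fin 10)))) (hne : a ≠ b) :
    gadgetE.Adj a b := by
  rw [gadgetE, SimpleGraph.fromEdgeSet_adj]
  refine ⟨?_, hne⟩
  simpa using h

set_option maxHeartbeats 4000000 in
set_option synthInstance.maxHeartbeats 1000000 in
set_option synthInstance.maxSize 5000 in
lemma gadget_inner_key : ∀ W A B P Q R S F D E : Fin 3,
    W ≠ P → W ≠ R → W ≠ Q → W ≠ S → B ≠ P → B ≠ R → A ≠ Q → A ≠ S → A ≠ F → R ≠ Q →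
    R ≠ F → S ≠ P → S ≠ F → B ≠ F → A ≠ D → P ≠ D → B ≠ E → Q ≠ E → P ≠ E → Q ≠ D →
    R ≠ E → S ≠ D → W ≠ A ∧ W ≠ B ∧ A ≠ B := by decide

lemma fin3_force (U W A B : Fin 3) (h1 : U ≠ A) (h2 : U ≠ B) (h3 : W ≠ A) (h4 : W ≠ B)
    (h5 : A ≠ B) : U = W := by
  revert U W A B; decide

set_option maxHeartbeats 2000000 in
/-- In every injective 3-edge-coloring of the gadget `E`, the edges `uw`, `vw`, `wz`
all receive the same color. -/
theorem gadgetE_forced (c : Sym2 (Fin 10) → Fin 3) (hc : IsInjColoring gadgetE c) :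
    c s(0, 2) = c s(2, 3) ∧ c s(1, 2) = c s(2, 3) := by
  have h0 := hc 2 3 4 6 (gadgetE_adj_dec (by decide) (by decide)) (gadgetE_adj_dec (by decide) (by decide)) (gadgetE_adj_dec (by decide) (by decide)) (by decide) (by decide)
  have h1 := hc 2 3 4 7 (gadgetE_adj_dec (by decide) (by decide)) (gadgetE_adj_dec (by decide) (by decide)) (gadgetE_adj_dec (by decide) (by decide)) (by decide) (by decide)
  have h2 := hc 2 3 5 6 (gadgetE_adj_dec (by decide) (by decide)) (gadgetE_adj_dec (by decide) (by decide)) (gadgetE_adj_dec (by decide) (by decide)) (by decide) (by decide)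
  have h3 := hc 2 3 5 8 (gadgetE_adj_dec (by decide) (by decide)) (gadgetE_adj_dec (by decide) (by decide)) (gadgetE_adj_dec (by decide) (by decide)) (by decide) (by decide)
  have h4 := hc 5 3 4 6 (gadgetE_adj_dec (by decide) (by decide)) (gadgetE_adj_dec (by decide) (by decide)) (gadgetE_adj_dec (by decide) (by decide)) (by decide) (by decide)
  have h5 := hc 5 3 4 7 (gadgetE_adj_dec (by decide) (by decide)) (gadgetE_adj_dec (by decide) (by decide)) (gadgetE_adj_dec (by decide) (by decide)) (by decide) (by decide)
  have h6 := hc 4 3 5 6 (gadgetE_adj_dec (by decide) (by decide)) (gadgetE_adj_dec (by decide) (by decide)) (gadgetE_adj_dec (by decide) (by decide)) (by decide) (by decide)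
  have h7 := hc 4 3 5 8 (gadgetE_adj_dec (by decide) (by decide)) (gadgetE_adj_dec (by decide) (by decide)) (gadgetE_adj_dec (by decide) (by decide)) (by decide) (by decide)
  have h8 := hc 3 4 6 9 (gadgetE_adj_dec (by decide) (by decide)) (gadgetE_adj_dec (by decide) (by decide)) (gadgetE_adj_dec (by decide) (by decide)) (by decide) (by decide)
  have h9 := hc 7 4 6 5 (gadgetE_adj_dec (by decide) (by decide)) (gadgetE_adj_dec (by decide) (by decide)) (gadgetE_adj_dec (by decide) (by decide)) (by decide) (by decide)
  have h10 := hc 7 4 6 9 (gadgetE_adj_dec (by decide) (by decide)) (gadgetE_adj_dec (by decide) (by decide)) (gadgetE_adj_dec (by decide) (by decide)) (by decide) (by decide)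
  have h11 := hc 8 5 6 4 (gadgetE_adj_dec (by decide) (by decide)) (gadgetE_adj_dec (by decide) (by decide)) (gadgetE_adj_dec (by decide) (by decide)) (by decide) (by decide)
  have h12 := hc 8 5 6 9 (gadgetE_adj_dec (by decide) (by decide)) (gadgetE_adj_dec (by decide) (by decide)) (gadgetE_adj_dec (by decide) (by decide)) (by decide) (by decide)
  have h13 := hc 3 5 6 9 (gadgetE_adj_dec (by decide) (by decide)) (gadgetE_adj_dec (by decide) (by decide)) (gadgetE_adj_dec (by decide) (by decide)) (by decide) (by decide)
  have h14 := hc 3 4 7 9 (gadgetE_adj_dec (by decide) (by decide)) (gadgetE_adj_dec (by decide) (by decide)) (gadgetE_adj_dec (by decide) (by decide)) (by decide) (by decide)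
  have h15 := hc 6 4 7 9 (gadgetE_adj_dec (by decide) (by decide)) (gadgetE_adj_dec (by decide) (by decide)) (gadgetE_adj_dec (by decide) (by decide)) (by decide) (by decide)
  have h16 := hc 3 5 8 9 (gadgetE_adj_dec (by decide) (by decide)) (gadgetE_adj_dec (by decide) (by decide)) (gadgetE_adj_dec (by decide) (by decide)) (by decide) (by decide)
  have h17 := hc 6 5 8 9 (gadgetE_adj_dec (by decide) (by decide)) (gadgetE_adj_dec (by decide) (by decide)) (gadgetE_adj_dec (by decide) (by decide)) (by decide) (by decide)
  have h18 := hc 4 6 9 8 (gadgetE_adj_dec (by decide) (by decide)) (gadgetE_adj_dec (by decide) (by decide)) (gadgetE_adj_dec (by decide) (by decide)) (by decide) (by decide)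
  have h19 := hc 5 6 9 7 (gadgetE_adj_dec (by decide) (by decide)) (gadgetE_adj_dec (by decide) (by decide)) (gadgetE_adj_dec (by decide) (by decide)) (by decide) (by decide)
  have h20 := hc 4 7 9 8 (gadgetE_adj_dec (by decide) (by decide)) (gadgetE_adj_dec (by decide) (by decide)) (gadgetE_adj_dec (by decide) (by decide)) (by decide) (by decide)
  have h21 := hc 5 8 9 7 (gadgetE_adj_dec (by decide) (by decide)) (gadgetE_adj_dec (by decide) (by decide)) (gadgetE_adj_dec (by decide) (by decide)) (by decide) (by decide)
  have h22 := hc 0 2 3 4 (gadgetE_adj_dec (by decide) (by decide)) (gadgetE_adj_dec (by decide) (by decide)) (gadgetE_adj_dec (by decide) (by decide)) (by decide) (by decide)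
  have h23 := hc 0 2 3 5 (gadgetE_adj_dec (by decide) (by decide)) (gadgetE_adj_dec (by decide) (by decide)) (gadgetE_adj_dec (by decide) (by decide)) (by decide) (by decide)
  have h24 := hc 1 2 3 4 (gadgetE_adj_dec (by decide) (by decide)) (gadgetE_adj_dec (by decide) (by decide)) (gadgetE_adj_dec (by decide) (by decide)) (by decide) (by decide)
  have h25 := hc 1 2 3 5 (gadgetE_adj_dec (by decide) (by decide)) (gadgetE_adj_dec (by decide) (by decide)) (gadgetE_adj_dec (by decide) (by decide)) (by decide) (by decide)
  rw [show (s(5,3) : Sym2 (Fin 10)) = s(3,5) from Sym2.eq_swap] at h4 h5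
  rw [show (s(4,3) : Sym2 (Fin 10)) = s(3,4) from Sym2.eq_swap] at h6 h7
  rw [show (s(7,4) : Sym2 (Fin 10)) = s(4,7) from Sym2.eq_swap] at h9 h10
  rw [show (s(8,5) : Sym2 (Fin 10)) = s(5,8) from Sym2.eq_swap] at h11 h12
  rw [show (s(6,4) : Sym2 (Fin 10)) = s(4,6) from Sym2.eq_swap] at h11 h15
  rw [show (s(6,5) : Sym2 (Fin 10)) = s(5,6) from Sym2.eq_swap] at h9 h17
  rw [show (s(9,8) : Sym2 (Fin 10)) = s(8,9) from Sym2.eq_swap] at h18 h20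
  rw [show (s(9,7) : Sym2 (Fin 10)) = s(7,9) from Sym2.eq_swap] at h19 h21
  obtain ⟨k1, k2, k3⟩ := gadget_inner_key (c s(2,3)) (c s(3,4)) (c s(3,5)) (c s(4,6))
    (c s(5,6)) (c s(4,7)) (c s(5,8)) (c s(6,9)) (c s(7,9)) (c s(8,9))
    h0 h1 h2 h3 h4 h5 h6 h7 h8 h9 h10 h11 h12 h13 h14 h15 h16 h17 h18 h19 h20 h21
  exact ⟨fin3_force _ _ _ _ h22 h23 k1 k2 k3, fin3_force _ _ _ _ h24 h25 k1 k2 k3⟩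
end

section
/- Let E be the graph on vertex set {u, v, w, z, a, b, c, d, e, f} with edges uw, vw, wz, za, zb, ac, bc, ad, be, cf, df, ef. For every choice of a color α ∈ {1,2,3}, there exists an injective 3-edge-coloring of E in which uw, vw, and wz are all colored α. -/
def baseF (i j : Fin 10) : Fin 3 :=
  let p := (min i j).val * 10 + (max i j).val
  if p = 34 ∨ p = 46 ∨ p = 47 then 1 else if p = 35 ∨ p = 56 ∨ p = 58 then 2 else 0

lemma baseF_symm (i j : Fin 10) : baseF i j = baseF j i := by
  simp [baseF, min_comm, max_comm]

def cBase : Sym2 (Fin 10) → Fin 3 := Sym2.lift ⟨baseF, baseF_symm⟩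

lemma gadgetE_adj_iff (a b : Fin 10) :
    gadgetE.Adj a b ↔ (s(a, b) ∈ ([s(0, 2), s(1, 2), s(2, 3), s(3, 4), s(3, 5), s(4, 6),
      s(5, 6), s(4, 7), s(5, 8), s(6, 9), s(7, 9), s(8, 9)] : List (Sym2 (Fin 10))) ∧ a ≠ b) := by
  simp [gadgetE, SimpleGraph.fromEdgeSet_adj, Set.mem_insert_iff]

instance : DecidableRel gadgetE.Adj := fun a b =>
  decidable_of_iff _ (gadgetE_adj_iff a b).symm

lemma cBase_inj : IsInjColoring gadgetE cBase := by
  unfold IsInjColoring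
  decide

/-- For every color `α`, the gadget `E` has an injective 3-edge-coloring in which
`uw`, `vw` and `wz` are all colored `α`. -/
theorem gadgetE_realizable (α : Fin 3) :
    ∃ c : Sym2 (Fin 10) → Fin 3, IsInjColoring gadgetE c ∧
      c s(0, 2) = α ∧ c s(1, 2) = α ∧ c s(2, 3) = α := by
  refine ⟨fun s => cBase s + α, ?_, ?_, ?_, ?_⟩
  · intro a b x y h1 h2 h3 h4 h5 h
    exact cBase_inj a b x y h1 h2 h3 h4 h5 (by simpa using h)
  · have h : cBase s(0, 2) = 0 := by decide
    show cBase s(0, 2) + α = α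
    rw [h, zero_add]
  · have h : cBase s(1, 2) = 0 := by decide
    show cBase s(1, 2) + α = α
    rw [h, zero_add]
  · have h : cBase s(2, 3) = 0 := by decide
    show cBase s(2, 3) + α = α
    rw [h, zero_add]
end

section
/- Let S be the graph consisting of a 9-cycle x_0 x_1 ... x_8 together with the chords x_1x_8, x_2x_4, x_5x_7, and pendant vertices y_0, y_3, y_6 attached to x_0, x_3, x_6. For every injective 4-edge-coloring γ of S, writing C_i = {γ(x_i x_{i+1}), γ(x_i x_{i-1})} (indices mod 9), we have C_0 ∪ C_3 ∪ C_6 = {1,2,3,4}, and there exists a color a with a ∈ C_0 ∩ C_3 ∩ C_6. -/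
/-- The vertex gadget `S`: a 9-cycle `x_0 … x_8` (vertices `0 … 8`), chords
`x_1x_8, x_2x_4, x_5x_7`, and pendant vertices `y_0 = 9, y_3 = 10, y_6 = 11`
attached to `x_0, x_3, x_6` respectively. -/
def gadgetS : SimpleGraph (Fin 12) :=
  SimpleGraph.fromEdgeSet
    {s(0, 1), s(1, 2), s(2, 3), s(3, 4), s(4, 5), s(5, 6), s(6, 7), s(7, 8), s(8, 0),
     s(1, 8), s(2, 4), s(5, 7), s(0, 9), s(3, 10), s(6, 11)}

lemma gadget_adj {a b : Fin 12}
    (h : (s(a, b) = s(0, 1) ∨ s(a, b) = s(1, 2) ∨ s(a, b) = s(2, 3) ∨ s(a, b) = s(3, 4) ∨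
      s(a, b) = s(4, 5) ∨ s(a, b) = s(5, 6) ∨ s(a, b) = s(6, 7) ∨ s(a, b) = s(7, 8) ∨
      s(a, b) = s(8, 0) ∨ s(a, b) = s(1, 8) ∨ s(a, b) = s(2, 4) ∨ s(a, b) = s(5, 7) ∨
      s(a, b) = s(0, 9) ∨ s(a, b) = s(3, 10) ∨ s(a, b) = s(6, 11)) ∧ a ≠ b) :
    gadgetS.Adj a b := by
  rw [gadgetS, SimpleGraph.fromEdgeSet_adj]
  simpa only [Set.mem_insert_iff, Set.mem_singleton_iff] using h

def GadgetCheck : Prop :=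
  ∀ c0 : Fin 4, ∀ c1 : Fin 4, ∀ c2 : Fin 4, c0 ≠ c2 → ∀ c3 : Fin 4, c1 ≠ c3 → c2 ≠ c3 → ∀ c4 : Fin 4, c1 ≠ c4 → c2 ≠ c4 → ∀ c5 : Fin 4, c3 ≠ c5 → ∀ c6 : Fin 4, c4 ≠ c6 → c5 ≠ c6 → ∀ c7 : Fin 4, c0 ≠ c7 → c1 ≠ c7 → c4 ≠ c7 → c5 ≠ c7 → ∀ c8 : Fin 4, c0 ≠ c8 → c1 ≠ c8 → c6 ≠ c8 → ∀ c9 : Fin 4, c0 ≠ c9 → c6 ≠ c9 → c2 ≠ c9 → c8 ≠ c9 → ∀ c10 : Fin 4, c0 ≠ c10 → c2 ≠ c10 → c5 ≠ c10 → c9 ≠ c10 → c3 ≠ c10 → ∀ c11 : Fin 4, c8 ≠ c11 → c9 ≠ c11 → c10 ≠ c11 → c3 ≠ c11 → c5 ≠ c11 → c6 ≠ c11 → ∀ c12 : Fin 4, c9 ≠ c12 → c1 ≠ c12 → c7 ≠ c12 → ∀ c13 : Fin 4, c1 ≠ c13 → c10 ≠ c13 → c4 ≠ c13 → ∀ c14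 : Fin 4, c4 ≠ c14 → c11 ≠ c14 → c7 ≠ c14 → 
  (∀ x : Fin 4, x = c0 ∨ x = c8 ∨ x = c3 ∨ x = c2 ∨ x = c6 ∨ x = c5) ∧
  ∃ a : Fin 4, (a = c0 ∨ a = c8) ∧ (a = c3 ∨ a = c2) ∧ (a = c6 ∨ a = c5)

set_option maxRecDepth 8000 in
set_option synthInstance.maxSize 2000 in
set_option synthInstance.maxHeartbeats 1000000 in
set_option maxHeartbeats 2000000 in
theorem gadgetCheck : GadgetCheck := by unfold GadgetCheck; decide


/-- In every injective 4-edge-coloring of `S`, with `C_i` the pair of colors of the two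
cycle edges at `x_i` (`i ∈ {0,3,6}`), we have `C_0 ∪ C_3 ∪ C_6 = {1,2,3,4}` and some
color lies in all three sets. -/
theorem gadgetS_C_union_inter (γ : Sym2 (Fin 12) → Fin 4) (hγ : IsInjColoring gadgetS γ) :
    ({γ s(0, 1), γ s(8, 0), γ s(3, 4), γ s(2, 3), γ s(6, 7), γ s(5, 6)} : Set (Fin 4)) =
      Set.univ ∧
    ∃ a : Fin 4,
      (a = γ s(0, 1) ∨ a = γ s(8, 0)) ∧
      (a = γ s(3, 4) ∨ a = γ s(2, 3)) ∧
      (a = γ s(6, 7) ∨ a = γ s(5, 6)) := by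
  have h_0_2 : γ s(0, 1) ≠ γ s(2, 3) := by
    have h := hγ 0 1 2 3 (gadget_adj (a := 0) (b := 1) (by decide)) (gadget_adj (a := 1) (b := 2) (by decide)) (gadget_adj (a := 2) (b := 3) (by decide)) (by decide) (by decide)
    exact h
  have h_1_3 : γ s(1, 2) ≠ γ s(3, 4) := by
    have h := hγ 1 2 3 4 (gadget_adj (a := 1) (b := 2) (by decide)) (gadget_adj (a := 2) (b := 3) (by decide)) (gadget_adj (a := 3) (b := 4) (by decide)) (by decide) (by decide)
    exact h
  have h_2_3 : γ s(2, 3) ≠ γ s(3, 4) := by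
    have h := hγ 3 2 4 3 (gadget_adj (a := 3) (b := 2) (by decide)) (gadget_adj (a := 2) (b := 4) (by decide)) (gadget_adj (a := 4) (b := 3) (by decide)) (by decide) (by decide)
    rw [show (s(3, 2) : Sym2 (Fin 12)) = s(2, 3) from Sym2.eq_swap, show (s(4, 3) : Sym2 (Fin 12)) = s(3, 4) from Sym2.eq_swap] at h
    exact h
  have h_1_4 : γ s(1, 2) ≠ γ s(4, 5) := by
    have h := hγ 1 2 4 5 (gadget_adj (a := 1) (b := 2) (by decide)) (gadget_adj (a := 2) (b := 4) (by decide)) (gadget_adj (a := 4) (b := 5) (by decide)) (by decide) (by decide)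
    exact h
  have h_2_4 : γ s(2, 3) ≠ γ s(4, 5) := by
    have h := hγ 2 3 4 5 (gadget_adj (a := 2) (b := 3) (by decide)) (gadget_adj (a := 3) (b := 4) (by decide)) (gadget_adj (a := 4) (b := 5) (by decide)) (by decide) (by decide)
    exact h
  have h_3_5 : γ s(3, 4) ≠ γ s(5, 6) := by
    have h := hγ 3 4 5 6 (gadget_adj (a := 3) (b := 4) (by decide)) (gadget_adj (a := 4) (b := 5) (by decide)) (gadget_adj (a := 5) (b := 6) (by decide)) (by decide) (by decide)
    exact h
  have h_4_6 : γ s(4, 5) ≠ γ s(6, 7) := by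
    have h := hγ 4 5 6 7 (gadget_adj (a := 4) (b := 5) (by decide)) (gadget_adj (a := 5) (b := 6) (by decide)) (gadget_adj (a := 6) (b := 7) (by decide)) (by decide) (by decide)
    exact h
  have h_5_6 : γ s(5, 6) ≠ γ s(6, 7) := by
    have h := hγ 6 5 7 6 (gadget_adj (a := 6) (b := 5) (by decide)) (gadget_adj (a := 5) (b := 7) (by decide)) (gadget_adj (a := 7) (b := 6) (by decide)) (by decide) (by decide)
    rw [show (s(6, 5) : Sym2 (Fin 12)) = s(5, 6) from Sym2.eq_swap, show (s(7, 6) : Sym2 (Fin 12)) = s(6, 7) from Sym2.eq_swap] at h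
    exact h
  have h_0_7 : γ s(0, 1) ≠ γ s(7, 8) := by
    have h := hγ 0 1 8 7 (gadget_adj (a := 0) (b := 1) (by decide)) (gadget_adj (a := 1) (b := 8) (by decide)) (gadget_adj (a := 8) (b := 7) (by decide)) (by decide) (by decide)
    rw [show (s(8, 7) : Sym2 (Fin 12)) = s(7, 8) from Sym2.eq_swap] at h
    exact h
  have h_1_7 : γ s(1, 2) ≠ γ s(7, 8) := by
    have h := hγ 2 1 8 7 (gadget_adj (a := 2) (b := 1) (by decide)) (gadget_adj (a := 1) (b := 8) (by decide)) (gadget_adj (a := 8) (b := 7) (by decide)) (by decide) (by decide)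
    rw [show (s(2, 1) : Sym2 (Fin 12)) = s(1, 2) from Sym2.eq_swap, show (s(8, 7) : Sym2 (Fin 12)) = s(7, 8) from Sym2.eq_swap] at h
    exact h
  have h_4_7 : γ s(4, 5) ≠ γ s(7, 8) := by
    have h := hγ 4 5 7 8 (gadget_adj (a := 4) (b := 5) (by decide)) (gadget_adj (a := 5) (b := 7) (by decide)) (gadget_adj (a := 7) (b := 8) (by decide)) (by decide) (by decide)
    exact h
  have h_5_7 : γ s(5, 6) ≠ γ s(7, 8) := by
    have h := hγ 5 6 7 8 (gadget_adj (a := 5) (b := 6) (by decide)) (gadget_adj (a := 6) (b := 7) (by decide)) (gadget_adj (a := 7) (b := 8) (by decide)) (by decide) (by decide)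
    exact h
  have h_0_8 : γ s(0, 1) ≠ γ s(8, 0) := by
    have h := hγ 0 1 8 0 (gadget_adj (a := 0) (b := 1) (by decide)) (gadget_adj (a := 1) (b := 8) (by decide)) (gadget_adj (a := 8) (b := 0) (by decide)) (by decide) (by decide)
    exact h
  have h_1_8 : γ s(1, 2) ≠ γ s(8, 0) := by
    have h := hγ 2 1 8 0 (gadget_adj (a := 2) (b := 1) (by decide)) (gadget_adj (a := 1) (b := 8) (by decide)) (gadget_adj (a := 8) (b := 0) (by decide)) (by decide) (by decide)
    rw [show (s(2, 1) : Sym2 (Fin 12)) = s(1, 2) from Sym2.eq_swap] at h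
    exact h
  have h_6_8 : γ s(6, 7) ≠ γ s(8, 0) := by
    have h := hγ 6 7 8 0 (gadget_adj (a := 6) (b := 7) (by decide)) (gadget_adj (a := 7) (b := 8) (by decide)) (gadget_adj (a := 8) (b := 0) (by decide)) (by decide) (by decide)
    exact h
  have h_0_9 : γ s(0, 1) ≠ γ s(1, 8) := by
    have h := hγ 1 0 8 1 (gadget_adj (a := 1) (b := 0) (by decide)) (gadget_adj (a := 0) (b := 8) (by decide)) (gadget_adj (a := 8) (b := 1) (by decide)) (by decide) (by decide)
    rw [show (s(1, 0) : Sym2 (Fin 12)) = s(0, 1) from Sym2.eq_swap, show (s(8, 1) : Sym2 (Fin 12)) = s(1, 8) from Sym2.eq_swap] at h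
    exact h
  have h_2_9 : γ s(2, 3) ≠ γ s(1, 8) := by
    have h := hγ 3 2 1 8 (gadget_adj (a := 3) (b := 2) (by decide)) (gadget_adj (a := 2) (b := 1) (by decide)) (gadget_adj (a := 1) (b := 8) (by decide)) (by decide) (by decide)
    rw [show (s(3, 2) : Sym2 (Fin 12)) = s(2, 3) from Sym2.eq_swap] at h
    exact h
  have h_6_9 : γ s(6, 7) ≠ γ s(1, 8) := by
    have h := hγ 6 7 8 1 (gadget_adj (a := 6) (b := 7) (by decide)) (gadget_adj (a := 7) (b := 8) (by decide)) (gadget_adj (a := 8) (b := 1) (by decide)) (by decide) (by decide)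
    rw [show (s(8, 1) : Sym2 (Fin 12)) = s(1, 8) from Sym2.eq_swap] at h
    exact h
  have h_8_9 : γ s(8, 0) ≠ γ s(1, 8) := by
    have h := hγ 8 0 1 8 (gadget_adj (a := 8) (b := 0) (by decide)) (gadget_adj (a := 0) (b := 1) (by decide)) (gadget_adj (a := 1) (b := 8) (by decide)) (by decide) (by decide)
    exact h
  have h_0_10 : γ s(0, 1) ≠ γ s(2, 4) := by
    have h := hγ 0 1 2 4 (gadget_adj (a := 0) (b := 1) (by decide)) (gadget_adj (a := 1) (b := 2) (by decide)) (gadget_adj (a := 2) (b := 4) (by decide)) (by decide) (by decide)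
    exact h
  have h_2_10 : γ s(2, 3) ≠ γ s(2, 4) := by
    have h := hγ 2 3 4 2 (gadget_adj (a := 2) (b := 3) (by decide)) (gadget_adj (a := 3) (b := 4) (by decide)) (gadget_adj (a := 4) (b := 2) (by decide)) (by decide) (by decide)
    rw [show (s(4, 2) : Sym2 (Fin 12)) = s(2, 4) from Sym2.eq_swap] at h
    exact h
  have h_3_10 : γ s(3, 4) ≠ γ s(2, 4) := by
    have h := hγ 4 3 2 4 (gadget_adj (a := 4) (b := 3) (by decide)) (gadget_adj (a := 3) (b := 2) (by decide)) (gadget_adj (a := 2) (b := 4) (by decide)) (by decide) (by decide)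
    rw [show (s(4, 3) : Sym2 (Fin 12)) = s(3, 4) from Sym2.eq_swap] at h
    exact h
  have h_5_10 : γ s(5, 6) ≠ γ s(2, 4) := by
    have h := hγ 6 5 4 2 (gadget_adj (a := 6) (b := 5) (by decide)) (gadget_adj (a := 5) (b := 4) (by decide)) (gadget_adj (a := 4) (b := 2) (by decide)) (by decide) (by decide)
    rw [show (s(6, 5) : Sym2 (Fin 12)) = s(5, 6) from Sym2.eq_swap, show (s(4, 2) : Sym2 (Fin 12)) = s(2, 4) from Sym2.eq_swap] at h
    exact h
  have h_9_10 : γ s(1, 8) ≠ γ s(2, 4) := by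
    have h := hγ 8 1 2 4 (gadget_adj (a := 8) (b := 1) (by decide)) (gadget_adj (a := 1) (b := 2) (by decide)) (gadget_adj (a := 2) (b := 4) (by decide)) (by decide) (by decide)
    rw [show (s(8, 1) : Sym2 (Fin 12)) = s(1, 8) from Sym2.eq_swap] at h
    exact h
  have h_3_11 : γ s(3, 4) ≠ γ s(5, 7) := by
    have h := hγ 3 4 5 7 (gadget_adj (a := 3) (b := 4) (by decide)) (gadget_adj (a := 4) (b := 5) (by decide)) (gadget_adj (a := 5) (b := 7) (by decide)) (by decide) (by decide)
    exact h
  have h_5_11 : γ s(5, 6) ≠ γ s(5, 7) := by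
    have h := hγ 5 6 7 5 (gadget_adj (a := 5) (b := 6) (by decide)) (gadget_adj (a := 6) (b := 7) (by decide)) (gadget_adj (a := 7) (b := 5) (by decide)) (by decide) (by decide)
    rw [show (s(7, 5) : Sym2 (Fin 12)) = s(5, 7) from Sym2.eq_swap] at h
    exact h
  have h_6_11 : γ s(6, 7) ≠ γ s(5, 7) := by
    have h := hγ 7 6 5 7 (gadget_adj (a := 7) (b := 6) (by decide)) (gadget_adj (a := 6) (b := 5) (by decide)) (gadget_adj (a := 5) (b := 7) (by decide)) (by decide) (by decide)
    rw [show (s(7, 6) : Sym2 (Fin 12)) = s(6, 7) from Sym2.eq_swap] at h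
    exact h
  have h_8_11 : γ s(8, 0) ≠ γ s(5, 7) := by
    have h := hγ 0 8 7 5 (gadget_adj (a := 0) (b := 8) (by decide)) (gadget_adj (a := 8) (b := 7) (by decide)) (gadget_adj (a := 7) (b := 5) (by decide)) (by decide) (by decide)
    rw [show (s(0, 8) : Sym2 (Fin 12)) = s(8, 0) from Sym2.eq_swap, show (s(7, 5) : Sym2 (Fin 12)) = s(5, 7) from Sym2.eq_swap] at h
    exact h
  have h_9_11 : γ s(1, 8) ≠ γ s(5, 7) := by
    have h := hγ 1 8 7 5 (gadget_adj (a := 1) (b := 8) (by decide)) (gadget_adj (a := 8) (b := 7) (by decide)) (gadget_adj (a := 7) (b := 5) (by decide)) (by decide) (by decide)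
    rw [show (s(7, 5) : Sym2 (Fin 12)) = s(5, 7) from Sym2.eq_swap] at h
    exact h
  have h_10_11 : γ s(2, 4) ≠ γ s(5, 7) := by
    have h := hγ 2 4 5 7 (gadget_adj (a := 2) (b := 4) (by decide)) (gadget_adj (a := 4) (b := 5) (by decide)) (gadget_adj (a := 5) (b := 7) (by decide)) (by decide) (by decide)
    exact h
  have h_1_12 : γ s(1, 2) ≠ γ s(0, 9) := by
    have h := hγ 2 1 0 9 (gadget_adj (a := 2) (b := 1) (by decide)) (gadget_adj (a := 1) (b := 0) (by decide)) (gadget_adj (a := 0) (b := 9) (by decide)) (by decide) (by decide)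
    rw [show (s(2, 1) : Sym2 (Fin 12)) = s(1, 2) from Sym2.eq_swap] at h
    exact h
  have h_7_12 : γ s(7, 8) ≠ γ s(0, 9) := by
    have h := hγ 7 8 0 9 (gadget_adj (a := 7) (b := 8) (by decide)) (gadget_adj (a := 8) (b := 0) (by decide)) (gadget_adj (a := 0) (b := 9) (by decide)) (by decide) (by decide)
    exact h
  have h_9_12 : γ s(1, 8) ≠ γ s(0, 9) := by
    have h := hγ 1 8 0 9 (gadget_adj (a := 1) (b := 8) (by decide)) (gadget_adj (a := 8) (b := 0) (by decide)) (gadget_adj (a := 0) (b := 9) (by decide)) (by decide) (by decide)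
    exact h
  have h_1_13 : γ s(1, 2) ≠ γ s(3, 10) := by
    have h := hγ 1 2 3 10 (gadget_adj (a := 1) (b := 2) (by decide)) (gadget_adj (a := 2) (b := 3) (by decide)) (gadget_adj (a := 3) (b := 10) (by decide)) (by decide) (by decide)
    exact h
  have h_4_13 : γ s(4, 5) ≠ γ s(3, 10) := by
    have h := hγ 5 4 3 10 (gadget_adj (a := 5) (b := 4) (by decide)) (gadget_adj (a := 4) (b := 3) (by decide)) (gadget_adj (a := 3) (b := 10) (by decide)) (by decide) (by decide)
    rw [show (s(5, 4) : Sym2 (Fin 12)) = s(4, 5) from Sym2.eq_swap] at h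
    exact h
  have h_10_13 : γ s(2, 4) ≠ γ s(3, 10) := by
    have h := hγ 2 4 3 10 (gadget_adj (a := 2) (b := 4) (by decide)) (gadget_adj (a := 4) (b := 3) (by decide)) (gadget_adj (a := 3) (b := 10) (by decide)) (by decide) (by decide)
    exact h
  have h_4_14 : γ s(4, 5) ≠ γ s(6, 11) := by
    have h := hγ 4 5 6 11 (gadget_adj (a := 4) (b := 5) (by decide)) (gadget_adj (a := 5) (b := 6) (by decide)) (gadget_adj (a := 6) (b := 11) (by decide)) (by decide) (by decide)
    exact h
  have h_7_14 : γ s(7, 8) ≠ γ s(6, 11) := by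
    have h := hγ 8 7 6 11 (gadget_adj (a := 8) (b := 7) (by decide)) (gadget_adj (a := 7) (b := 6) (by decide)) (gadget_adj (a := 6) (b := 11) (by decide)) (by decide) (by decide)
    rw [show (s(8, 7) : Sym2 (Fin 12)) = s(7, 8) from Sym2.eq_swap] at h
    exact h
  have h_11_14 : γ s(5, 7) ≠ γ s(6, 11) := by
    have h := hγ 5 7 6 11 (gadget_adj (a := 5) (b := 7) (by decide)) (gadget_adj (a := 7) (b := 6) (by decide)) (gadget_adj (a := 6) (b := 11) (by decide)) (by decide) (by decide)
    exact h
  have H := gadgetCheck (γ s(0, 1)) (γ s(1, 2)) (γ s(2, 3)) h_0_2 (γ s(3, 4)) h_1_3 h_2_3 (γ s(4, 5)) h_1_4 h_2_4 (γ s(5, 6)) h_3_5 (γ s(6, 7)) h_4_6 h_5_6 (γ s(7, 8)) h_0_7 h_1_7 h_4_7 h_5_7 (γ s(8, 0)) h_0_8 h_1_8 h_6_8 (γ s(1, 8)) h_0_9 h_6_9 h_2_9 h_8_9 (γ s(2, 4)) h_0_10 h_2_10 h_5_10 h_9_10 h_3_10 (γ s(5, 7)) h_8_11 h_9_11 h_10_11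 h_3_11 h_5_11 h_6_11 (γ s(0, 9)) h_9_12 h_1_12 h_7_12 (γ s(3, 10)) h_1_13 h_10_13 h_4_13 (γ s(6, 11)) h_4_14 h_11_14 h_7_14
  refine ⟨?_, H.2⟩
  ext x
  simp only [Set.mem_insert_iff, Set.mem_singleton_iff, Set.mem_univ, iff_true]
  exact H.1 x
end

section
/- The graph S consisting of a 9-cycle x_0 x_1 ... x_8 with chords x_1x_8, x_2x_4, x_5x_7 and pendant vertices y_0, y_3, y_6 attached to x_0, x_3, x_6 admits an injective 4-edge-coloring. -/
def myColor : Sym2 (Fin 12) → Fin 4 :=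
  fun e =>
    if e = s(0,1) then 0 else if e = s(1,2) then 0 else if e = s(2,3) then 1
    else if e = s(3,4) then 2 else if e = s(4,5) then 2 else if e = s(5,6) then 1
    else if e = s(6,7) then 3 else if e = s(7,8) then 3 else if e = s(8,0) then 1
    else if e = s(1,8) then 2 else if e = s(2,4) then 3 else if e = s(5,7) then 0
    else if e = s(0,9) then 1 else if e = s(3,10) then 1 else if e = s(6,11) then 1
    else 0

set_option maxHeartbeats 8000000 in
set_option synthInstance.maxHeartbeats 2000000 in
set_option synthInstance.maxSize 5000 in
/-- The gadget `S` admits an injective 4-edge-coloring. -/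
theorem gadgetS_colorable :
    ∃ γ : Sym2 (Fin 12) → Fin 4, IsInjColoring gadgetS γ := by
  refine ⟨myColor, ?_⟩
  unfold IsInjColoring gadgetS
  simp only [SimpleGraph.fromEdgeSet_adj, Set.mem_insert_iff, Set.mem_singleton_iff]
  decide
end

section
/- Let H be the graph obtained from the complete graph K4 on vertices x_1, x_2, x_3, x_4 by subdividing each edge x_i x_j once (calling the subdivision vertex x_{ij}) and attaching a pendant vertex y_{ij} to each x_{ij}. Then in every injective 3-edge-coloring of H, for each pair i < j, the three edges incident with x_{ij} (namely x_{ij}x_i, x_{ij}x_j, and x_{ij}y_{ij}) all receive the same color. -/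
/-- The gadget `H`: `K4` on `x_1=0, x_2=1, x_3=2, x_4=3`, each edge `x_i x_j` subdivided
by `x_{ij}` (`x_{12}=4, x_{13}=5, x_{14}=6, x_{23}=7, x_{24}=8, x_{34}=9`), and a pendant
vertex `y_{ij}` (`y_{12}=10, …, y_{34}=15`) attached to each `x_{ij}`. -/
def gadgetH : SimpleGraph (Fin 16) :=
  SimpleGraph.fromEdgeSet
    {s(4, 0), s(4, 1), s(4, 10), s(5, 0), s(5, 2), s(5, 11), s(6, 0), s(6, 3), s(6, 12),
     s(7, 1), s(7, 2), s(7, 13), s(8, 1), s(8, 3), s(8, 14), s(9, 2), s(9, 3), s(9, 15)}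

lemma adj_4_0 : gadgetH.Adj (4 : Fin 16) 0 := by
  rw [gadgetH, SimpleGraph.fromEdgeSet_adj]
  exact ⟨Set.mem_insert _ _, by decide⟩
lemma adj_4_1 : gadgetH.Adj (4 : Fin 16) 1 := by
  rw [gadgetH, SimpleGraph.fromEdgeSet_adj]
  exact ⟨Set.mem_insert_of_mem _ (Set.mem_insert _ _), by decide⟩
lemma adj_4_10 : gadgetH.Adj (4 : Fin 16) 10 := by
  rw [gadgetH, SimpleGraph.fromEdgeSet_adj]
  exact ⟨Set.mem_insert_of_mem _ (Set.mem_insert_of_mem _ (Set.mem_insert _ _)), by decide⟩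
lemma adj_5_0 : gadgetH.Adj (5 : Fin 16) 0 := by
  rw [gadgetH, SimpleGraph.fromEdgeSet_adj]
  exact ⟨Set.mem_insert_of_mem _ (Set.mem_insert_of_mem _ (Set.mem_insert_of_mem _ (Set.mem_insert _ _))), by decide⟩
lemma adj_5_2 : gadgetH.Adj (5 : Fin 16) 2 := by
  rw [gadgetH, SimpleGraph.fromEdgeSet_adj]
  exact ⟨Set.mem_insert_of_mem _ (Set.mem_insert_of_mem _ (Set.mem_insert_of_mem _ (Set.mem_insert_of_mem _ (Set.mem_insert _ _)))), by decide⟩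
lemma adj_5_11 : gadgetH.Adj (5 : Fin 16) 11 := by
  rw [gadgetH, SimpleGraph.fromEdgeSet_adj]
  exact ⟨Set.mem_insert_of_mem _ (Set.mem_insert_of_mem _ (Set.mem_insert_of_mem _ (Set.mem_insert_of_mem _ (Set.mem_insert_of_mem _ (Set.mem_insert _ _))))), by decide⟩
lemma adj_6_0 : gadgetH.Adj (6 : Fin 16) 0 := by
  rw [gadgetH, SimpleGraph.fromEdgeSet_adj]
  exact ⟨Set.mem_insert_of_mem _ (Set.mem_insert_of_mem _ (Set.mem_insert_of_mem _ (Set.mem_insert_of_mem _ (Set.mem_insert_of_mem _ (Set.mem_insert_of_mem _ (Set.mem_insert _ _)))))), by decide⟩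
lemma adj_6_3 : gadgetH.Adj (6 : Fin 16) 3 := by
  rw [gadgetH, SimpleGraph.fromEdgeSet_adj]
  exact ⟨Set.mem_insert_of_mem _ (Set.mem_insert_of_mem _ (Set.mem_insert_of_mem _ (Set.mem_insert_of_mem _ (Set.mem_insert_of_mem _ (Set.mem_insert_of_mem _ (Set.mem_insert_of_mem _ (Set.mem_insert _ _))))))), by decide⟩
lemma adj_6_12 : gadgetH.Adj (6 : Fin 16) 12 := by
  rw [gadgetH, SimpleGraph.fromEdgeSet_adj]
  exact ⟨Set.mem_insert_of_mem _ (Set.mem_insert_of_mem _ (Set.mem_insert_of_mem _ (Set.mem_insert_of_mem _ (Set.mem_insert_of_mem _ (Set.mem_insert_of_mem _ (Set.mem_insert_of_mem _ (Set.mem_insert_of_mem _ (Set.mem_insert _ _)))))))), by decide⟩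
lemma adj_7_1 : gadgetH.Adj (7 : Fin 16) 1 := by
  rw [gadgetH, SimpleGraph.fromEdgeSet_adj]
  exact ⟨Set.mem_insert_of_mem _ (Set.mem_insert_of_mem _ (Set.mem_insert_of_mem _ (Set.mem_insert_of_mem _ (Set.mem_insert_of_mem _ (Set.mem_insert_of_mem _ (Set.mem_insert_of_mem _ (Set.mem_insert_of_mem _ (Set.mem_insert_of_mem _ (Set.mem_insert _ _))))))))), by decide⟩
lemma adj_7_2 : gadgetH.Adj (7 : Fin 16) 2 := by
  rw [gadgetH, SimpleGraph.fromEdgeSet_adj]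
  exact ⟨Set.mem_insert_of_mem _ (Set.mem_insert_of_mem _ (Set.mem_insert_of_mem _ (Set.mem_insert_of_mem _ (Set.mem_insert_of_mem _ (Set.mem_insert_of_mem _ (Set.mem_insert_of_mem _ (Set.mem_insert_of_mem _ (Set.mem_insert_of_mem _ (Set.mem_insert_of_mem _ (Set.mem_insert _ _)))))))))), by decide⟩
lemma adj_7_13 : gadgetH.Adj (7 : Fin 16) 13 := by
  rw [gadgetH, SimpleGraph.fromEdgeSet_adj]
  exact ⟨Set.mem_insert_of_mem _ (Set.mem_insert_of_mem _ (Set.mem_insert_of_mem _ (Set.mem_insert_of_mem _ (Set.mem_insert_of_mem _ (Set.mem_insert_of_mem _ (Set.mem_insert_of_mem _ (Set.mem_insert_of_mem _ (Set.mem_insert_of_mem _ (Set.mem_insert_of_mem _ (Set.mem_insert_of_mem _ (Set.mem_insert _ _))))))))))), by decide⟩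
lemma adj_8_1 : gadgetH.Adj (8 : Fin 16) 1 := by
  rw [gadgetH, SimpleGraph.fromEdgeSet_adj]
  exact ⟨Set.mem_insert_of_mem _ (Set.mem_insert_of_mem _ (Set.mem_insert_of_mem _ (Set.mem_insert_of_mem _ (Set.mem_insert_of_mem _ (Set.mem_insert_of_mem _ (Set.mem_insert_of_mem _ (Set.mem_insert_of_mem _ (Set.mem_insert_of_mem _ (Set.mem_insert_of_mem _ (Set.mem_insert_of_mem _ (Set.mem_insert_of_mem _ (Set.mem_insert _ _)))))))))))), by decide⟩
lemma adj_8_3 : gadgetH.Adj (8 : Fin 16) 3 := by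
  rw [gadgetH, SimpleGraph.fromEdgeSet_adj]
  exact ⟨Set.mem_insert_of_mem _ (Set.mem_insert_of_mem _ (Set.mem_insert_of_mem _ (Set.mem_insert_of_mem _ (Set.mem_insert_of_mem _ (Set.mem_insert_of_mem _ (Set.mem_insert_of_mem _ (Set.mem_insert_of_mem _ (Set.mem_insert_of_mem _ (Set.mem_insert_of_mem _ (Set.mem_insert_of_mem _ (Set.mem_insert_of_mem _ (Set.mem_insert_of_mem _ (Set.mem_insert _ _))))))))))))), by decide⟩
lemma adj_8_14 : gadgetH.Adj (8 : Fin 16) 14 := by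
  rw [gadgetH, SimpleGraph.fromEdgeSet_adj]
  exact ⟨Set.mem_insert_of_mem _ (Set.mem_insert_of_mem _ (Set.mem_insert_of_mem _ (Set.mem_insert_of_mem _ (Set.mem_insert_of_mem _ (Set.mem_insert_of_mem _ (Set.mem_insert_of_mem _ (Set.mem_insert_of_mem _ (Set.mem_insert_of_mem _ (Set.mem_insert_of_mem _ (Set.mem_insert_of_mem _ (Set.mem_insert_of_mem _ (Set.mem_insert_of_mem _ (Set.mem_insert_of_mem _ (Set.mem_insert _ _)))))))))))))), by decide⟩
lemma adj_9_2 : gadgetH.Adj (9 : Fin 16) 2 := by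
  rw [gadgetH, SimpleGraph.fromEdgeSet_adj]
  exact ⟨Set.mem_insert_of_mem _ (Set.mem_insert_of_mem _ (Set.mem_insert_of_mem _ (Set.mem_insert_of_mem _ (Set.mem_insert_of_mem _ (Set.mem_insert_of_mem _ (Set.mem_insert_of_mem _ (Set.mem_insert_of_mem _ (Set.mem_insert_of_mem _ (Set.mem_insert_of_mem _ (Set.mem_insert_of_mem _ (Set.mem_insert_of_mem _ (Set.mem_insert_of_mem _ (Set.mem_insert_of_mem _ (Set.mem_insert_of_mem _ (Set.mem_insert _ _))))))))))))))), by decide⟩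
lemma adj_9_3 : gadgetH.Adj (9 : Fin 16) 3 := by
  rw [gadgetH, SimpleGraph.fromEdgeSet_adj]
  exact ⟨Set.mem_insert_of_mem _ (Set.mem_insert_of_mem _ (Set.mem_insert_of_mem _ (Set.mem_insert_of_mem _ (Set.mem_insert_of_mem _ (Set.mem_insert_of_mem _ (Set.mem_insert_of_mem _ (Set.mem_insert_of_mem _ (Set.mem_insert_of_mem _ (Set.mem_insert_of_mem _ (Set.mem_insert_of_mem _ (Set.mem_insert_of_mem _ (Set.mem_insert_of_mem _ (Set.mem_insert_of_mem _ (Set.mem_insert_of_mem _ (Set.mem_insert_of_mem _ (Set.mem_insert _ _)))))))))))))))), by decide⟩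
lemma adj_9_15 : gadgetH.Adj (9 : Fin 16) 15 := by
  rw [gadgetH, SimpleGraph.fromEdgeSet_adj]
  exact ⟨Set.mem_insert_of_mem _ (Set.mem_insert_of_mem _ (Set.mem_insert_of_mem _ (Set.mem_insert_of_mem _ (Set.mem_insert_of_mem _ (Set.mem_insert_of_mem _ (Set.mem_insert_of_mem _ (Set.mem_insert_of_mem _ (Set.mem_insert_of_mem _ (Set.mem_insert_of_mem _ (Set.mem_insert_of_mem _ (Set.mem_insert_of_mem _ (Set.mem_insert_of_mem _ (Set.mem_insert_of_mem _ (Set.mem_insert_of_mem _ (Set.mem_insert_of_mem _ (Set.mem_insert_of_mem _ (Set.mem_singleton _))))))))))))))))), by decide⟩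

lemma pig (x a b c : Fin 3) (h1 : x ≠ a) (h2 : x ≠ b) (h3 : a ≠ b) (h4 : c ≠ a)
    (h5 : c ≠ b) : x = c := by
  have := x.isLt; have := a.isLt; have := b.isLt; have := c.isLt
  simp only [Ne, Fin.ext_iff] at *
  omega

lemma key (A1 A2 A3 B1 B2 B3 C1 C2 C3 D1 D2 D3 E1 E2 E3 F1 F2 F3 : Fin 3)
    (n1 : B1 ≠ A2)
    (n2 : B1 ≠ A3)
    (n3 : C1 ≠ A2)
    (n4 : C1 ≠ A3)
    (n5 : A1 ≠ B2)
    (n6 : A1 ≠ B3)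
    (n7 : C1 ≠ B2)
    (n8 : C1 ≠ B3)
    (n9 : A1 ≠ C2)
    (n10 : A1 ≠ C3)
    (n11 : B1 ≠ C2)
    (n12 : B1 ≠ C3)
    (n13 : D1 ≠ A1)
    (n14 : D1 ≠ A3)
    (n15 : E1 ≠ A1)
    (n16 : E1 ≠ A3)
    (n17 : A2 ≠ D2)
    (n18 : A2 ≠ D3)
    (n19 : E1 ≠ D2)
    (n20 : E1 ≠ D3)
    (n21 : A2 ≠ E2)
    (n22 : A2 ≠ E3)
    (n23 : D1 ≠ E2)
    (n24 : D1 ≠ E3)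
    (n25 : D2 ≠ B1)
    (n26 : D2 ≠ B3)
    (n27 : F1 ≠ B1)
    (n28 : F1 ≠ B3)
    (n29 : B2 ≠ D1)
    (n30 : B2 ≠ D3)
    (n31 : F1 ≠ D1)
    (n32 : F1 ≠ D3)
    (n33 : B2 ≠ F2)
    (n34 : B2 ≠ F3)
    (n35 : D2 ≠ F2)
    (n36 : D2 ≠ F3)
    (n37 : E2 ≠ C1)
    (n38 : E2 ≠ C3)
    (n39 : F2 ≠ C1)
    (n40 : F2 ≠ C3)
    (n41 : C2 ≠ E1)
    (n42 : C2 ≠ E3)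
    (n43 : F2 ≠ E1)
    (n44 : F2 ≠ E3)
    (n45 : C2 ≠ F1)
    (n46 : C2 ≠ F3)
    (n47 : E2 ≠ F1)
    (n48 : E2 ≠ F3)
    : A1 = A2 ∧ A2 = A3 := by
  rcases eq_or_ne A1 A2 with h12 | h12
  · rcases eq_or_ne A2 A3 with h23 | h23
    · exact ⟨h12, h23⟩
    · exfalso
      subst h12
      have hB3 : B3 = A3 := pig B3 A1 C1 A3 n6.symm n8.symm n3.symm h23.symm n4.symm
      have hD2 : D2 = A3 := pig D2 A1 E1 A3 n17.symm n19.symm n15.symm h23.symm n16.symm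
      exact n26 (hD2.trans hB3.symm)
  · rcases eq_or_ne A2 A3 with h23 | h23
    · exfalso
      subst h23
      have hD3 : D3 = A1 := pig D3 A2 E1 A1 n18.symm n20.symm n16.symm h12 n15.symm
      have hE3 : E3 = A1 := pig E3 A2 D1 A1 n22.symm n24.symm n14.symm h12 n13.symm
      have hB2 : B2 = A2 := pig B2 D1 A1 A2 n29 (hD3 ▸ n30) n13 n14.symm h12.symm
      have hF2 : F2 = A2 := pig F2 E1 A1 A2 n43 (hE3 ▸ n44) n15 n16.symm h12.symm
      exact n33 (hB2.trans hF2.symm)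
    · rcases eq_or_ne A1 A3 with h13 | h13
      · exfalso
        subst h13
        have hD2 : D2 = A1 := pig D2 B1 A2 A1 n25 n17.symm n1 n2.symm h12
        have hC3 : C3 = A2 := pig C3 A1 B1 A2 n10.symm n12.symm n2.symm h12.symm n1.symm
        have hF2 : F2 = A1 := pig F2 C1 A2 A1 n39 (hC3 ▸ n40) n3 n4.symm h12
        exact n35 (hD2.trans hF2.symm)
      · exfalso
        have hB1 : B1 = A1 := pig B1 A2 A3 A1 n1 n2 h23 h12 h13
        have hC1 : C1 = A1 := pig C1 A2 A3 A1 n3 n4 h23 h12 h13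
        have hE1 : E1 = A2 := pig E1 A1 A3 A2 n15 n16 h13 h12.symm h23
        have hD2 : D2 = A3 := pig D2 A2 A1 A3 n17.symm (hB1 ▸ n25) h12.symm h23.symm h13.symm
        have hF2 : F2 = A3 := pig F2 A1 A2 A3 (hC1 ▸ n39) (hE1 ▸ n43) h12 h13.symm h23.symm
        exact n35 (hD2.trans hF2.symm)

set_option maxHeartbeats 4000000 in
/-- In every injective 3-edge-coloring of `H`, the three edges incident with each
subdivision vertex `x_{ij}` receive the same color. -/
theorem gadgetH_monochromatic (c : Sym2 (Fin 16) → Fin 3) (hc : IsInjColoring gadgetH c) :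
    (c s(4, 0) = c s(4, 1) ∧ c s(4, 1) = c s(4, 10)) ∧
    (c s(5, 0) = c s(5, 2) ∧ c s(5, 2) = c s(5, 11)) ∧
    (c s(6, 0) = c s(6, 3) ∧ c s(6, 3) = c s(6, 12)) ∧
    (c s(7, 1) = c s(7, 2) ∧ c s(7, 2) = c s(7, 13)) ∧
    (c s(8, 1) = c s(8, 3) ∧ c s(8, 3) = c s(8, 14)) ∧
    (c s(9, 2) = c s(9, 3) ∧ c s(9, 3) = c s(9, 15)) := by
  have k1 := hc 5 0 4 1 (adj_5_0) (adj_4_0.symm) (adj_4_1) (by decide) (by decide)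
  have k2 := hc 5 0 4 10 (adj_5_0) (adj_4_0.symm) (adj_4_10) (by decide) (by decide)
  have k3 := hc 6 0 4 1 (adj_6_0) (adj_4_0.symm) (adj_4_1) (by decide) (by decide)
  have k4 := hc 6 0 4 10 (adj_6_0) (adj_4_0.symm) (adj_4_10) (by decide) (by decide)
  have k5 := hc 4 0 5 2 (adj_4_0) (adj_5_0.symm) (adj_5_2) (by decide) (by decide)
  have k6 := hc 4 0 5 11 (adj_4_0) (adj_5_0.symm) (adj_5_11) (by decide) (by decide)
  have k7 := hc 6 0 5 2 (adj_6_0) (adj_5_0.symm) (adj_5_2) (by decide) (by decide)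
  have k8 := hc 6 0 5 11 (adj_6_0) (adj_5_0.symm) (adj_5_11) (by decide) (by decide)
  have k9 := hc 4 0 6 3 (adj_4_0) (adj_6_0.symm) (adj_6_3) (by decide) (by decide)
  have k10 := hc 4 0 6 12 (adj_4_0) (adj_6_0.symm) (adj_6_12) (by decide) (by decide)
  have k11 := hc 5 0 6 3 (adj_5_0) (adj_6_0.symm) (adj_6_3) (by decide) (by decide)
  have k12 := hc 5 0 6 12 (adj_5_0) (adj_6_0.symm) (adj_6_12) (by decide) (by decide)
  have k13 := hc 7 1 4 0 (adj_7_1) (adj_4_1.symm) (adj_4_0) (by decide) (by decide)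
  have k14 := hc 7 1 4 10 (adj_7_1) (adj_4_1.symm) (adj_4_10) (by decide) (by decide)
  have k15 := hc 8 1 4 0 (adj_8_1) (adj_4_1.symm) (adj_4_0) (by decide) (by decide)
  have k16 := hc 8 1 4 10 (adj_8_1) (adj_4_1.symm) (adj_4_10) (by decide) (by decide)
  have k17 := hc 4 1 7 2 (adj_4_1) (adj_7_1.symm) (adj_7_2) (by decide) (by decide)
  have k18 := hc 4 1 7 13 (adj_4_1) (adj_7_1.symm) (adj_7_13) (by decide) (by decide)
  have k19 := hc 8 1 7 2 (adj_8_1) (adj_7_1.symm) (adj_7_2) (by decide) (by decide)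
  have k20 := hc 8 1 7 13 (adj_8_1) (adj_7_1.symm) (adj_7_13) (by decide) (by decide)
  have k21 := hc 4 1 8 3 (adj_4_1) (adj_8_1.symm) (adj_8_3) (by decide) (by decide)
  have k22 := hc 4 1 8 14 (adj_4_1) (adj_8_1.symm) (adj_8_14) (by decide) (by decide)
  have k23 := hc 7 1 8 3 (adj_7_1) (adj_8_1.symm) (adj_8_3) (by decide) (by decide)
  have k24 := hc 7 1 8 14 (adj_7_1) (adj_8_1.symm) (adj_8_14) (by decide) (by decide)
  have k25 := hc 7 2 5 0 (adj_7_2) (adj_5_2.symm) (adj_5_0) (by decide) (by decide)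
  have k26 := hc 7 2 5 11 (adj_7_2) (adj_5_2.symm) (adj_5_11) (by decide) (by decide)
  have k27 := hc 9 2 5 0 (adj_9_2) (adj_5_2.symm) (adj_5_0) (by decide) (by decide)
  have k28 := hc 9 2 5 11 (adj_9_2) (adj_5_2.symm) (adj_5_11) (by decide) (by decide)
  have k29 := hc 5 2 7 1 (adj_5_2) (adj_7_2.symm) (adj_7_1) (by decide) (by decide)
  have k30 := hc 5 2 7 13 (adj_5_2) (adj_7_2.symm) (adj_7_13) (by decide) (by decide)
  have k31 := hc 9 2 7 1 (adj_9_2) (adj_7_2.symm) (adj_7_1) (by decide) (by decide)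
  have k32 := hc 9 2 7 13 (adj_9_2) (adj_7_2.symm) (adj_7_13) (by decide) (by decide)
  have k33 := hc 5 2 9 3 (adj_5_2) (adj_9_2.symm) (adj_9_3) (by decide) (by decide)
  have k34 := hc 5 2 9 15 (adj_5_2) (adj_9_2.symm) (adj_9_15) (by decide) (by decide)
  have k35 := hc 7 2 9 3 (adj_7_2) (adj_9_2.symm) (adj_9_3) (by decide) (by decide)
  have k36 := hc 7 2 9 15 (adj_7_2) (adj_9_2.symm) (adj_9_15) (by decide) (by decide)
  have k37 := hc 8 3 6 0 (adj_8_3) (adj_6_3.symm) (adj_6_0) (by decide) (by decide)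
  have k38 := hc 8 3 6 12 (adj_8_3) (adj_6_3.symm) (adj_6_12) (by decide) (by decide)
  have k39 := hc 9 3 6 0 (adj_9_3) (adj_6_3.symm) (adj_6_0) (by decide) (by decide)
  have k40 := hc 9 3 6 12 (adj_9_3) (adj_6_3.symm) (adj_6_12) (by decide) (by decide)
  have k41 := hc 6 3 8 1 (adj_6_3) (adj_8_3.symm) (adj_8_1) (by decide) (by decide)
  have k42 := hc 6 3 8 14 (adj_6_3) (adj_8_3.symm) (adj_8_14) (by decide) (by decide)
  have k43 := hc 9 3 8 1 (adj_9_3) (adj_8_3.symm) (adj_8_1) (by decide) (by decide)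
  have k44 := hc 9 3 8 14 (adj_9_3) (adj_8_3.symm) (adj_8_14) (by decide) (by decide)
  have k45 := hc 6 3 9 2 (adj_6_3) (adj_9_3.symm) (adj_9_2) (by decide) (by decide)
  have k46 := hc 6 3 9 15 (adj_6_3) (adj_9_3.symm) (adj_9_15) (by decide) (by decide)
  have k47 := hc 8 3 9 2 (adj_8_3) (adj_9_3.symm) (adj_9_2) (by decide) (by decide)
  have k48 := hc 8 3 9 15 (adj_8_3) (adj_9_3.symm) (adj_9_15) (by decide) (by decide)
  exact ⟨key _ _ _ _ _ _ _ _ _ _ _ _ _ _ _ _ _ _ k1 k2 k3 k4 k5 k6 k7 k8 k9 k10 k11 k12 k13 k14 k15 k16 k17 k18 k19 k20 k21 k22 k23 k24 k25 k26 k27 k28 k29 k30 k31 k32 k33 k34 k35 k36 k37 k38 k39 k40 k41 k42 k43 k44 k45 k46 k47 k48, key _ _ _ _ _ _ _ _ _ _ _ _ _ _ _ _ _ _ k5 k6 k7 k8 k1 k2 k3 k4 k11 k12 k9 k10 k25 k26 k27 k28 k29 k30 k31 k32 k33 k34 k35 k36 k13 k14 k15 k16 k17 k18 k19 k20 k21 k22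 k23 k24 k39 k40 k37 k38 k45 k46 k47 k48 k41 k42 k43 k44, key _ _ _ _ _ _ _ _ _ _ _ _ _ _ _ _ _ _ k9 k10 k11 k12 k3 k4 k1 k2 k7 k8 k5 k6 k37 k38 k39 k40 k41 k42 k43 k44 k45 k46 k47 k48 k15 k16 k13 k14 k21 k22 k23 k24 k17 k18 k19 k20 k27 k28 k25 k26 k33 k34 k35 k36 k29 k30 k31 k32, key _ _ _ _ _ _ _ _ _ _ _ _ _ _ _ _ _ _ k17 k18 k19 k20 k13 k14 k15 k16 k23 k24 k21 k22 k29 k30 k31 k32 k25 k26 k27 k28 k35 k36 k33 k34 k1 k2 k3 k4 k5 k6 k7 k8 k9 k10 k11 k12 k43 k44 k41 k42 k47 k48 k45 k46 k37 k38 k39 k40, key _ _ _ _ _ _ _ _ _ _ _ _ _ _ _ _ _ _ k21 k22 k23 k24 k15 k16 k13 k14 k19 k20 k17 k18 k41 k42 k43 k44 k37 k38 k39 k40 k47 k48 k45 k46 k3 k4 k1 k2 k9 k10 k11 k12 k5 k6 k7 k8 k31 k32 k29 k30 k35 k36 k33 k34 k25 k26 k27 k28, key _ _ _ _ _ _ _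 _ _ _ _ _ _ _ _ _ _ _ k33 k34 k35 k36 k27 k28 k25 k26 k31 k32 k29 k30 k45 k46 k47 k48 k39 k40 k37 k38 k43 k44 k41 k42 k7 k8 k5 k6 k11 k12 k9 k10 k1 k2 k3 k4 k19 k20 k17 k18 k23 k24 k21 k22 k13 k14 k15 k16⟩
end

section
/- The graph H obtained from K4 by subdividing each edge once and attaching a pendant vertex to each subdivision vertex admits an injective 3-edge-coloring. -/
def adjB0 : Nat → Nat → Bool
  | 4, 0 => true
  | 0, 4 => true
  | 4, 1 => true
  | 1, 4 => true
  | 4, 10 => true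
  | 10, 4 => true
  | 5, 0 => true
  | 0, 5 => true
  | 5, 2 => true
  | 2, 5 => true
  | 5, 11 => true
  | 11, 5 => true
  | 6, 0 => true
  | 0, 6 => true
  | 6, 3 => true
  | 3, 6 => true
  | 6, 12 => true
  | 12, 6 => true
  | 7, 1 => true
  | 1, 7 => true
  | 7, 2 => true
  | 2, 7 => true
  | 7, 13 => true
  | 13, 7 => true
  | 8, 1 => true
  | 1, 8 => true
  | 8, 3 => true
  | 3, 8 => true
  | 8, 14 => true
  | 14, 8 => true
  | 9, 2 => true
  | 2, 9 => true
  | 9, 3 => true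
  | 3, 9 => true
  | 9, 15 => true
  | 15, 9 => true
  | _, _ => false

/-- Boolean adjacency for `gadgetH`. -/
def adjB (a b : Fin 16) : Bool := adjB0 a.val b.val

lemma gadgetH_adj_iff : ∀ a b : Fin 16, gadgetH.Adj a b ↔ adjB a b = true := by
  intro a b
  rw [gadgetH, SimpleGraph.fromEdgeSet_adj]
  simp only [Set.mem_insert_iff, Set.mem_singleton_iff]
  revert a b
  decide

/-- vertex color: edges are colored by the color of their subdivision endpoint. -/
def vcol : Fin 16 → Fin 3
  | 4 => 0 | 5 => 1 | 6 => 2 | 7 => 2 | 8 => 1 | 9 => 0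
  | _ => 0

def ecol : Sym2 (Fin 16) → Fin 3 :=
  Sym2.lift ⟨fun a b => vcol a + vcol b, fun a b => add_comm _ _⟩

set_option maxHeartbeats 4000000 in
/-- The gadget `H` admits an injective 3-edge-coloring. -/
theorem gadgetH_colorable :
    ∃ c : Sym2 (Fin 16) → Fin 3, IsInjColoring gadgetH c := by
  refine ⟨ecol, ?_⟩
  intro a b x y hab hbx hxy hax hby
  rw [gadgetH_adj_iff] at hab hbx hxy
  revert hab hbx hxy hax hby
  revert a b x y
  decide
end

section
/- Let G be a bipartite graph with parts A and B, and let G_A be the graph on vertex set A where two vertices u, v ∈ A are adjacent if and only if they are at distance 2 in G. If γ is a proper 3-vertex-coloring of G_A, then the edge-coloring of G assigning to each edge uv (with u ∈ A, v ∈ B) the color γ(u) is an injective 3-edge-coloring of G. -/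
/-- If `G` is bipartite with part `A` (each edge has exactly one endpoint in `A`) and
`γ` is a proper 3-coloring of the square graph `G_A` on `A` (vertices of `A` adjacent
iff they have a common neighbor in `G`), then coloring each edge `uv` (with `u ∈ A`)
by `γ u` is an injective 3-edge-coloring of `G`. -/
theorem injColoring_of_square_coloring {V : Type*} (G : SimpleGraph V) (A : Set V)
    (hbip : ∀ u v : V, G.Adj u v → (u ∈ A ↔ v ∉ A))
    (γ : V → Fin 3)
    (hproper : ∀ u ∈ A, ∀ v ∈ A, u ≠ v → (∃ w, G.Adj u w ∧ G.Adj v w) → γ u ≠ γ v) :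
    ∃ c : Sym2 V → Fin 3, IsInjColoring G c ∧
      ∀ u v : V, G.Adj u v → u ∈ A → c s(u, v) = γ u := by
  classical
  set f : V → V → Fin 3 := fun u v =>
    if u ∈ A then (if v ∈ A then γ u ⊔ γ v else γ u)
    else (if v ∈ A then γ v else γ u ⊔ γ v) with hf
  have hsym : ∀ u v, f u v = f v u := by
    intro u v
    simp only [hf]
    by_cases hu : u ∈ A <;> by_cases hv : v ∈ A <;> simp [hu, hv, sup_comm]
  have hval : ∀ u v : V, G.Adj u v → u ∈ A → Sym2.lift ⟨f, hsym⟩ s(u, v) = γ u := by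
    intro u v huv hu
    have hv : v ∉ A := (hbip u v huv).mp hu
    simp [hf, hu, hv]
  refine ⟨Sym2.lift ⟨f, hsym⟩, ?_, hval⟩
  intro a b x y hab hbx hxy hax hby
  by_cases ha : a ∈ A
  · have hb : b ∉ A := (hbip a b hab).mp ha
    have hx : x ∈ A := by
      by_contra hx
      exact hb ((hbip b x hbx).mpr hx)
    have hne := hproper a ha x hx hax ⟨b, hab, hbx.symm⟩
    rw [hval a b hab ha, hval x y hxy hx]
    exact hne
  · have hb : b ∈ A := by
      by_contra hb
      exact ha ((hbip a b hab).mpr hb)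
    have hx : x ∉ A := (hbip b x hbx).mp hb
    have hy : y ∈ A := by
      by_contra hy
      exact hx ((hbip x y hxy).mpr hy)
    have hne := hproper b hb y hy hby ⟨x, hbx, hxy.symm⟩
    have e1 : Sym2.lift ⟨f, hsym⟩ s(a, b) = γ b := by
      rw [Sym2.eq_swap]; exact hval b a hab.symm hb
    have e2 : Sym2.lift ⟨f, hsym⟩ s(x, y) = γ y := by
      rw [Sym2.eq_swap]; exact hval y x hxy.symm hy
    rw [e1, e2]; exact hne
end

section
/- If G is a bipartite graph with parts A and B and maximum degree at most 3, and G has girth at least 16, then the 'square graph' G_A on A (where u, v ∈ A are adjacent iff they have a common neighbor in G) has no cycles of length k for any 4 ≤ k ≤ 7. -/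
/-- The square graph `G_A` on the part `A`: `u` and `v` are adjacent iff they are
distinct members of `A` with a common neighbor in `G`. -/
def squareOn {V : Type*} (G : SimpleGraph V) (A : Set V) : SimpleGraph V where
  Adj u v := u ∈ A ∧ v ∈ A ∧ u ≠ v ∧ ∃ w, G.Adj u w ∧ G.Adj v w
  symm := by
    constructor
    rintro u v ⟨hu, hv, hne, w, h1, h2⟩
    exact ⟨hv, hu, hne.symm, w, h2, h1⟩
  loopless := by
    constructor
    rintro u ⟨-, -, hne, -⟩
    exact hne rfl

/-!
Lift a cycle `v₀ v₁ ⋯ v_{k-1}` of `G_A` to `G` by choosing a common neighbour `wᵢ ∉ A` of each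
pair `vᵢ vᵢ₊₁`. If `w₀ = w₁ = w₂`, this vertex is adjacent to the four distinct vertices
`v₀, …, v₃`, against subcubicity. Otherwise two different witnesses `w ≠ w'` meet at `v₁` or
`v₂`, and the lift of the rest of the cycle is a walk of length `2k - 2` from `w'` to `w` that
avoids that vertex (it meets `A` only in the other `vⱼ`). Closing it up through the vertex gives
a cycle of length at most `2k ≤ 14` in `G`, against the girth.
-/

namespace SimpleGraph

variable {V : Type*} {G : SimpleGraph V}

theorem length_le_degree_of_forall_adj [Fintype V] [DecidableRel G.Adj] {w : V} {l : List V}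
    (hl : l.Nodup) (hadj : ∀ x ∈ l, G.Adj w x) : l.length ≤ G.degree w := by
  classical
  rw [← card_neighborFinset_eq_degree, ← List.toFinset_card_of_nodup hl]
  exact Finset.card_le_card fun x hx => by simpa using hadj x (by simpa using hx)

theorem exists_isCycle_of_adj_of_notMem_support {u w w' : V} (hw : G.Adj u w)
    (hw' : G.Adj u w') (hne : w ≠ w') (r : G.Walk w' w) (hu : u ∉ r.support) :
    ∃ (x : V) (c : G.Walk x x), c.IsCycle ∧ c.length ≤ r.length + 2 := by
  classical
  refine ⟨u, .cons hw' (r.concat hw.symm).bypass, ?_, ?_⟩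
  · refine (Walk.cons_isCycle_iff _ hw').2 ⟨Walk.bypass_isPath _, fun he => ?_⟩
    have he := Walk.edges_bypass_subset_edges _ he
    rw [Walk.edges_concat, List.concat_eq_append, List.mem_append] at he
    rcases he with he | he
    · exact hu (r.fst_mem_support_of_mem_edges he)
    · simp [hw.ne, hne.symm] at he
  · simpa using (r.concat hw.symm).length_bypass_le_length

variable {A : Set V}

theorem Walk.exists_lift_of_squareOn (hA : G.IsIndepSet A) :
    ∀ {u v : V} (p : (squareOn G A).Walk u v), ∃ q : G.Walk u v,
      q.length = 2 * p.length ∧ ∀ x ∈ q.support, x ∈ A → x ∈ p.support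
  | _, _, .nil => ⟨.nil, by simp⟩
  | _, _, .cons h p => by
    obtain ⟨w, huw, hvw⟩ := h.2.2.2
    obtain ⟨q, hlen, hsupp⟩ := exists_lift_of_squareOn hA p
    refine ⟨.cons huw (.cons hvw.symm q), by simp only [Walk.length_cons, hlen]; ring, ?_⟩
    simp only [Walk.support_cons, List.mem_cons]
    rintro x (rfl | rfl | hx) hxA
    · exact .inl rfl
    · exact absurd huw (hA h.1 hxA huw.ne)
    · exact .inr (hsupp x hx hxA)

theorem IsIndepSet.exists_isCycle_of_squareOn_witnesses_ne (hA : G.IsIndepSet A) {u a b w w' : V}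
    (p : (squareOn G A).Walk a b) (huA : u ∈ A) (hu : u ∉ p.support)
    (hw : G.Adj u w) (hbw : G.Adj b w) (hw' : G.Adj u w') (haw' : G.Adj a w') (hne : w ≠ w') :
    ∃ (x : V) (c : G.Walk x x), c.IsCycle ∧ c.length ≤ 2 * p.length + 4 := by
  obtain ⟨q, hlen, hsupp⟩ := p.exists_lift_of_squareOn hA
  obtain ⟨x, c, hc, hlen'⟩ := exists_isCycle_of_adj_of_notMem_support hw hw' hne
    (.cons haw'.symm (q.concat hbw)) (by
      simp only [Walk.support_cons, Walk.support_concat, List.mem_cons, List.mem_append, not_or]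
      exact ⟨hw'.ne, fun h => hu (hsupp u h huA), hw.ne, List.not_mem_nil⟩)
  exact ⟨x, c, hc, by simpa only [Walk.length_cons, Walk.length_concat, hlen] using hlen'⟩

end SimpleGraph

/-- If `G` is bipartite with part `A`, subcubic, and has girth at least 16, then the
square graph `G_A` has no cycle of length `k` for any `4 ≤ k ≤ 7`. -/
theorem squareOn_no_short_cycles {V : Type*} [Fintype V] (G : SimpleGraph V)
    [DecidableRel G.Adj] (A : Set V)
    (hbip : ∀ u v : V, G.Adj u v → (u ∈ A ↔ v ∉ A))
    (hdeg : ∀ v : V, G.degree v ≤ 3)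
    (hgirth : 16 ≤ G.girth) :
    ∀ k : ℕ, 4 ≤ k → k ≤ 7 →
      ∀ (v : V) (w : (squareOn G A).Walk v v), ¬(w.IsCycle ∧ w.length = k) := by
  rintro k hk4 hk7 v₀ c ⟨hc, rfl⟩
  have hA : G.IsIndepSet A := fun u hu v hv _ huv => (hbip u v huv).1 hu hv
  rcases c with _ | ⟨h₀₁, _ | ⟨h₁₂, _ | ⟨h₂₃, r⟩⟩⟩ <;>
    simp only [SimpleGraph.Walk.length_cons, SimpleGraph.Walk.length_nil] at hk4 hk7 <;> try omega
  rename_i v₁ v₂ v₃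
  have hnd : (v₁ :: v₂ :: r.support).Nodup := hc.support_nodup
  have hv₁ : v₁ ∉ v₂ :: r.support := (List.nodup_cons.1 hnd).1
  have hv₂ : v₂ ∉ (r.concat h₀₁).support := by
    simp only [SimpleGraph.Walk.support_concat, List.mem_append, List.mem_singleton, not_or]
    exact ⟨(List.nodup_cons.1 (List.nodup_cons.1 hnd).2).1, (List.ne_of_not_mem_cons hv₁).symm⟩
  have hfour : [v₁, v₂, v₃, v₀].Nodup := hnd.sublist <| by
    rw [← r.cons_tail_support]
    exact ((List.singleton_sublist.2 (r.end_mem_tail_support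
      (SimpleGraph.Walk.not_nil_iff_lt_length.2 (by omega)))).cons_cons _).cons_cons _ |>.cons_cons _
  obtain ⟨w₀₁, h₀w₀₁, h₁w₀₁⟩ := h₀₁.2.2.2
  obtain ⟨w₁₂, h₁w₁₂, h₂w₁₂⟩ := h₁₂.2.2.2
  obtain ⟨w₂₃, h₂w₂₃, h₃w₂₃⟩ := h₂₃.2.2.2
  obtain ⟨x, d, hd, hlen⟩ :
      ∃ (x : V) (d : G.Walk x x), d.IsCycle ∧ d.length ≤ 2 * (r.length + 1) + 4 := by
    by_cases h₁ : w₀₁ = w₁₂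
    · by_cases h₂ : w₁₂ = w₂₃
      · subst h₁ h₂
        have := (G.length_le_degree_of_forall_adj hfour (by simp [G.adj_comm w₀₁, *])).trans
          (hdeg w₀₁)
        simp at this
      · simpa using hA.exists_isCycle_of_squareOn_witnesses_ne (r.concat h₀₁)
          h₁₂.2.1 hv₂ h₂w₁₂ h₁w₁₂ h₂w₂₃ h₃w₂₃ h₂
    · simpa using hA.exists_isCycle_of_squareOn_witnesses_ne (.cons h₂₃ r)
        h₀₁.2.1 hv₁ h₁w₀₁ h₀w₀₁ h₁w₁₂ h₂w₁₂ h₁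
  have := G.girth_le_length hd
  omega
end
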